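/- arXiv:2604.04065 — 11 statements merged into one kernel-verified Lean document; each statement's English description precedes it below -/
import Mathlib

section
/- Let a and b be positive integers with a ∣ b. Then alcm_a b equals the product, over all primes p whose exponent in the prime factorization of b is strictly larger than its exponent in a, of p raised to its exponent in b. Equivalently, for every prime p, the exponent of p in alcm_a b equals the exponent of p in b if that exponent is strictly larger than the exponent of p in a, and equals 0 otherwise. -/
/-- The anti-lcm of `b` with respect to `a`: the smallest positive `c` with `lcm(a, c) = b`. -/
noncomputable def alcm (a b : ℕ) : ℕ := sInf {c : ℕ | 0 < c ∧ Nat.lcm a c = b}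

/-!
Exponents of `lcm a c` are the maxima of those of `a` and `c`. So `lcm a c = b` forces the
exponent of `p` in `c` to be that of `b` wherever `a` falls short of `b`, and leaves it anywhere
between `0` and that of `b` elsewhere. Taking `0` at those primes gives a solution dividing
every other one, hence the least one.
-/

def excessPart (a b : ℕ) : ℕ :=
  (b.factorization.filter fun p => a.factorization p < b.factorization p).prod (· ^ ·)

section

variable {a b c : ℕ}

theorem factorization_excessPart (a b p : ℕ) :
    (excessPart a b).factorization p =
      if a.factorization p < b.factorization p then b.factorization p else 0 := by
  rw [excessPart, Nat.prod_pow_factorization_eq_self, Finsupp.filter_apply]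
  intro p hp
  rw [Finsupp.support_filter, Finset.mem_filter, Nat.support_factorization] at hp
  exact Nat.prime_of_mem_primeFactors hp.1

theorem excessPart_ne_zero (a b : ℕ) : excessPart a b ≠ 0 := by
  rw [excessPart, Finsupp.prod_ne_zero_iff]
  intro p hp
  rw [Finsupp.support_filter, Finset.mem_filter, Nat.support_factorization] at hp
  exact pow_ne_zero _ (Nat.prime_of_mem_primeFactors hp.1).ne_zero

theorem lcm_excessPart (ha : a ≠ 0) (hb : b ≠ 0) (hab : a ∣ b) :
    Nat.lcm a (excessPart a b) = b := by
  have hle := (Nat.factorization_le_iff_dvd ha hb).mpr hab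
  refine Nat.eq_of_factorization_eq (Nat.lcm_ne_zero ha (excessPart_ne_zero a b)) hb fun p => ?_
  rw [Nat.factorization_lcm ha (excessPart_ne_zero a b), Finsupp.sup_apply,
    factorization_excessPart]
  split_ifs with h
  · exact max_eq_right h.le
  · exact (max_eq_left (Nat.zero_le _)).trans (le_antisymm (hle p) (not_lt.mp h))

theorem excessPart_dvd_of_lcm_eq (ha : a ≠ 0) (hc : c ≠ 0) (h : Nat.lcm a c = b) :
    excessPart a b ∣ c := by
  rw [← Nat.factorization_le_iff_dvd (excessPart_ne_zero a b) hc]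
  intro p
  rw [factorization_excessPart, ← h, Nat.factorization_lcm ha hc, Finsupp.sup_apply]
  split_ifs with hp
  · have hac : a.factorization p < c.factorization p :=
      (lt_max_iff.mp hp).resolve_left (lt_irrefl _)
    exact max_le hac.le le_rfl
  · exact Nat.zero_le _

theorem alcm_eq_excessPart (ha : a ≠ 0) (hb : b ≠ 0) (hab : a ∣ b) :
    alcm a b = excessPart a b := by
  have hmem : excessPart a b ∈ {c : ℕ | 0 < c ∧ Nat.lcm a c = b} :=
    ⟨Nat.pos_of_ne_zero (excessPart_ne_zero a b), lcm_excessPart ha hb hab⟩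
  obtain ⟨hpos, hlcm⟩ := Nat.sInf_mem ⟨_, hmem⟩
  exact le_antisymm (Nat.sInf_le hmem)
    (Nat.le_of_dvd hpos (excessPart_dvd_of_lcm_eq ha hpos.ne' hlcm))

end

/-- for `0 < a ∣ b`, the exponent of each prime `p` in `alcm a b` is the
exponent of `p` in `b` when the latter is strictly larger than the exponent of `p` in `a`,
and `0` otherwise (i.e. `alcm a b = ∏_{e_b(p) > e_a(p)} p ^ e_b(p)`). -/
theorem alcm_factorization (a b : ℕ) (ha : 0 < a) (hb : 0 < b) (hab : a ∣ b) :
    ∀ p : ℕ, p.Prime →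
      (alcm a b).factorization p =
        if a.factorization p < b.factorization p then b.factorization p else 0 := by
  intro p _
  rw [alcm_eq_excessPart ha.ne' hb.ne' hab, factorization_excessPart]
end

section
/- Let a, b, c be positive integers with lcm(a, c) = b (so in particular a ∣ b). Then alcm_a b divides c, the quotient c / alcm_a b divides a, and c / alcm_a b is coprime with alcm_a b. -/
/-!
If `lcm a c = b` and `m = alcm a b`, then `gcd c m` is again a solution since `lcm` distributes
over `gcd`, so minimality forces `m ∣ c`. A prime `p` dividing both `m` and `b / m` would give
`p ^ (v_p m + 1) ∣ b = lcm a m`, hence `p ^ v_p m ∣ a`, and removing the `p`-part of `m` would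
leave a smaller solution; so `b / m` is coprime to `m`. Finally `b / m ∣ a` because `b ∣ a * m`,
and `c / m` divides `b / m`.
-/

namespace Nat

theorem lcm_gcd_distrib (a b c : ℕ) : lcm a (gcd b c) = gcd (lcm a b) (lcm a c) := by
  rcases eq_or_ne a 0 with rfl | ha
  · simp
  rcases eq_or_ne b 0 with rfl | hb
  · simp
  rcases eq_or_ne c 0 with rfl | hc
  · simp
  refine eq_of_factorization_eq' (lcm_ne_zero ha (gcd_ne_zero_left hb))
    (gcd_ne_zero_left (lcm_ne_zero ha hb)) ?_
  rw [factorization_lcm ha (gcd_ne_zero_left hb), factorization_gcd hb hc,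
    factorization_gcd (lcm_ne_zero ha hb) (lcm_ne_zero ha hc), factorization_lcm ha hb,
    factorization_lcm ha hc]
  ext p
  simp only [Finsupp.sup_apply, Finsupp.inf_apply]
  exact sup_inf_left _ _ _

theorem lcm_mul_left_eq_of_dvd_of_coprime {a u v : ℕ} (hu : u ∣ a) (huv : Coprime u v) :
    lcm a (u * v) = lcm a v := by
  rw [← huv.lcm_eq_mul, ← lcm_assoc, lcm_eq_left hu]

theorem Prime.pow_dvd_of_pow_dvd_lcm {p j a m : ℕ} (hp : p.Prime) (h : p ^ j ∣ lcm a m)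
    (hm : ¬p ^ j ∣ m) : p ^ j ∣ a := by
  rcases eq_or_ne a 0 with rfl | ha
  · exact dvd_zero _
  rcases eq_or_ne m 0 with rfl | hm0
  · exact absurd (dvd_zero _) hm
  rw [hp.pow_dvd_iff_le_factorization ha]
  rw [hp.pow_dvd_iff_le_factorization (lcm_ne_zero ha hm0), factorization_lcm ha hm0,
    Finsupp.sup_apply] at h
  rw [hp.pow_dvd_iff_le_factorization hm0] at hm
  omega

theorem div_dvd_of_lcm_eq {a b m : ℕ} (hm : 0 < m) (h : lcm a m = b) : b / m ∣ a := by
  rw [div_dvd_iff_dvd_mul (h ▸ dvd_lcm_right a m) hm, ← h, mul_comm]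
  exact lcm_dvd_mul a m

end Nat

section alcm

variable {a b c : ℕ}

theorem alcm_le (hc : 0 < c) (h : Nat.lcm a c = b) : alcm a b ≤ c :=
  Nat.sInf_le (s := {c | 0 < c ∧ Nat.lcm a c = b}) ⟨hc, h⟩

theorem alcm_pos_and_lcm_eq (hc : 0 < c) (h : Nat.lcm a c = b) :
    0 < alcm a b ∧ Nat.lcm a (alcm a b) = b :=
  Nat.sInf_mem (s := {c | 0 < c ∧ Nat.lcm a c = b}) ⟨c, hc, h⟩

theorem alcm_dvd (hc : 0 < c) (h : Nat.lcm a c = b) : alcm a b ∣ c := by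
  obtain ⟨hm, hmb⟩ := alcm_pos_and_lcm_eq hc h
  have hgcd : Nat.lcm a (Nat.gcd c (alcm a b)) = b := by
    rw [Nat.lcm_gcd_distrib, h, hmb, Nat.gcd_self]
  have hle := alcm_le (Nat.gcd_pos_of_pos_left _ hc) hgcd
  rw [← Nat.gcd_eq_right_iff_dvd]
  exact le_antisymm (Nat.le_of_dvd hm (Nat.gcd_dvd_right c _)) hle

theorem coprime_div_alcm_alcm (hc : 0 < c) (h : Nat.lcm a c = b) :
    Nat.Coprime (b / alcm a b) (alcm a b) := by
  obtain ⟨hm, hmb⟩ := alcm_pos_and_lcm_eq hc h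
  set m := alcm a b
  refine Nat.coprime_of_dvd fun p hp hpq hpm ↦ ?_
  have hk : m.factorization p ≠ 0 := (hp.factorization_pos_of_dvd hm.ne' hpm).ne'
  have hpow_b : p ^ (m.factorization p + 1) ∣ b := by
    rw [pow_succ, ← Nat.mul_div_cancel' (hmb ▸ Nat.dvd_lcm_right a m : m ∣ b)]
    exact mul_dvd_mul (Nat.ordProj_dvd m p) hpq
  have hpow_a : p ^ m.factorization p ∣ a :=
    (pow_dvd_pow p (m.factorization p).le_succ).trans <| hp.pow_dvd_of_pow_dvd_lcm (hmb ▸ hpow_b)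
      (Nat.pow_succ_factorization_not_dvd hm.ne' hp)
  have hcompl : Nat.lcm a (ordCompl[p] m) = b := by
    rw [← Nat.lcm_mul_left_eq_of_dvd_of_coprime hpow_a
      ((Nat.coprime_ordCompl hp hm.ne').pow_left _), Nat.ordProj_mul_ordCompl_eq_self, hmb]
  have hle : m ≤ ordCompl[p] m := alcm_le (Nat.ordCompl_pos p hm.ne') hcompl
  have hlt : ordCompl[p] m < m := Nat.div_lt_self hm (Nat.one_lt_pow hk hp.one_lt)
  omega

end alcm

theorem div_alcm_dvd_and_coprime_general (a b c : ℕ) (hc : 0 < c)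
    (h : Nat.lcm a c = b) :
    alcm a b ∣ c ∧ (c / alcm a b) ∣ a ∧ Nat.Coprime (c / alcm a b) (alcm a b) := by
  obtain ⟨hm, hmb⟩ := alcm_pos_and_lcm_eq hc h
  have hmc : alcm a b ∣ c := alcm_dvd hc h
  have hquot : c / alcm a b ∣ b / alcm a b :=
    Nat.div_dvd_div hmc (h ▸ Nat.dvd_lcm_right a c)
  exact ⟨hmc, hquot.trans (Nat.div_dvd_of_lcm_eq hm hmb),
    (coprime_div_alcm_alcm hc h).coprime_dvd_left hquot⟩

/-- if `lcm(a, c) = b` (with `a, b, c` positive), then `alcm a b ∣ c`,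
the quotient `c / alcm a b` divides `a`, and it is coprime with `alcm a b`. -/
theorem div_alcm_dvd_and_coprime (a b c : ℕ) (ha : 0 < a) (hb : 0 < b) (hc : 0 < c)
    (h : Nat.lcm a c = b) :
    alcm a b ∣ c ∧ (c / alcm a b) ∣ a ∧ Nat.Coprime (c / alcm a b) (alcm a b) :=
  div_alcm_dvd_and_coprime_general a b c hc h
end

section
/- Let a and b be positive integers with a ∣ b, and let k be a natural number such that for every prime p the exponent of p in the prime factorization of b is at most k. Then alcm_a b = gcd((b/a)^k, b). -/
section

variable {a b c₀ : ℕ}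

theorem alcm_eq_of_forall_dvd (hc₀ : 0 < c₀) (hlcm : Nat.lcm a c₀ = b)
    (hdvd : ∀ c, 0 < c → Nat.lcm a c = b → c₀ ∣ c) : alcm a b = c₀ :=
  IsLeast.csInf_eq ⟨⟨hc₀, hlcm⟩, fun c ⟨hc, h⟩ => Nat.le_of_dvd hc (hdvd c hc h)⟩

theorem alcm_eq_of_factorization (hb : b ≠ 0) (hab : a ∣ b) (hc₀ : c₀ ≠ 0)
    (h : ∀ p, c₀.factorization p =
      if a.factorization p < b.factorization p then b.factorization p else 0) :
    alcm a b = c₀ := by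
  have ha : a ≠ 0 := (Nat.pos_of_dvd_of_pos hab (Nat.pos_of_ne_zero hb)).ne'
  have hle : ∀ p, a.factorization p ≤ b.factorization p :=
    (Nat.factorization_le_iff_dvd ha hb).mpr hab
  have hmax : ∀ {c}, c ≠ 0 → ∀ p,
      (Nat.lcm a c).factorization p = max (a.factorization p) (c.factorization p) := by
    intro c hc p
    rw [Nat.factorization_lcm ha hc, Finsupp.sup_apply]
  refine alcm_eq_of_forall_dvd (Nat.pos_of_ne_zero hc₀) ?_ ?_
  · refine Nat.eq_of_factorization_eq (Nat.lcm_ne_zero ha hc₀) hb fun p => ?_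
    have hap := hle p
    rw [hmax hc₀, h]
    split_ifs <;> omega
  · rintro c hc hlcm
    refine (Nat.factorization_le_iff_dvd hc₀ hc.ne').mp fun p => ?_
    have hcp := hmax hc.ne' p
    rw [hlcm] at hcp
    rw [h]
    split_ifs <;> omega

end

theorem Nat.factorization_gcd_pow_div {a b k : ℕ} (hb : b ≠ 0) (hab : a ∣ b)
    (hk : ∀ p : ℕ, p.Prime → b.factorization p ≤ k) (p : ℕ) :
    (Nat.gcd ((b / a) ^ k) b).factorization p =
      if a.factorization p < b.factorization p then b.factorization p else 0 := by
  have hba : b / a ≠ 0 := (Nat.div_ne_zero_iff_of_dvd hab).mpr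
    ⟨hb, (Nat.pos_of_dvd_of_pos hab (Nat.pos_of_ne_zero hb)).ne'⟩
  rw [Nat.factorization_gcd (pow_ne_zero k hba) hb, Finsupp.inf_apply, Nat.factorization_pow,
    Nat.factorization_div hab, Finsupp.smul_apply, Finsupp.tsub_apply, smul_eq_mul]
  split_ifs with hlt
  · have hp : p.Prime := by
      by_contra hp
      rw [Nat.factorization_eq_zero_of_not_prime b hp] at hlt
      omega
    have hkle : k ≤ k * (b.factorization p - a.factorization p) :=
      Nat.le_mul_of_pos_right k (Nat.sub_pos_of_lt hlt)
    exact min_eq_right ((hk p hp).trans hkle)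
  · simp [Nat.sub_eq_zero_of_le (not_lt.mp hlt)]

theorem alcm_eq_gcd_pow_general (a b k : ℕ) (hb : 0 < b) (hab : a ∣ b)
    (hk : ∀ p : ℕ, p.Prime → b.factorization p ≤ k) :
    alcm a b = Nat.gcd ((b / a) ^ k) b :=
  alcm_eq_of_factorization hb.ne' hab (Nat.gcd_pos_of_pos_right _ hb).ne'
    (Nat.factorization_gcd_pow_div hb.ne' hab hk)

/-- if `0 < a ∣ b` and every prime exponent of `b` is at most `k`, then
`alcm a b = gcd((b/a)^k, b)`. -/
theorem alcm_eq_gcd_pow (a b k : ℕ) (ha : 0 < a) (hb : 0 < b) (hab : a ∣ b)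
    (hk : ∀ p : ℕ, p.Prime → b.factorization p ≤ k) :
    alcm a b = Nat.gcd ((b / a) ^ k) b :=
  alcm_eq_gcd_pow_general a b k hb hab hk
end

section
/- Let a and b be positive integers with a ∣ b, and define f : ℕ → ℕ by f(x) = gcd(b, x²). Then for every natural number n and every prime p, the exponent of p in the prime factorization of the n-th iterate f^[n](b/a) equals min(e_b(p), 2^n · (e_b(p) − e_a(p))), where e_a(p) and e_b(p) denote the exponents of p in the prime factorizations of a and b respectively. -/
/-!
Since `b ≠ 0`, the exponent of `p` in `gcd(b, y^k)` is `min(e_b(p), k · e_y(p))`, so each step of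
the iteration multiplies the exponent by `k` and caps it at `e_b(p)`; once capped it stays capped.
Starting from `e_{b/a}(p) = e_b(p) - e_a(p)`, which is already below the cap, this gives the formula.
-/

namespace Nat

variable {b k p : ℕ}

theorem factorization_gcd_pow_apply {x : ℕ} (hb : b ≠ 0) (hx : x ≠ 0) :
    (gcd b (x ^ k)).factorization p = min (b.factorization p) (k * x.factorization p) := by
  rw [factorization_gcd hb (pow_ne_zero k hx), Finsupp.inf_apply, factorization_pow]
  rfl

theorem iterate_gcd_pow_ne_zero {x : ℕ} (hb : b ≠ 0) (hx : x ≠ 0) (n : ℕ) :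
    (fun y => gcd b (y ^ k))^[n] x ≠ 0 := by
  induction n with
  | zero => exact hx
  | succ n _ =>
    rw [Function.iterate_succ_apply']
    exact (gcd_pos_of_pos_left _ (pos_of_ne_zero hb)).ne'

theorem min_mul_min_eq_min_mul (c m : ℕ) : min c (k * min c m) = min c (k * m) := by
  rcases k.eq_zero_or_pos with rfl | hk
  · simp
  · rw [mul_min, ← min_assoc, min_eq_left (Nat.le_mul_of_pos_left c hk)]

theorem factorization_iterate_gcd_pow {x : ℕ} (hb : b ≠ 0) (hx : x ≠ 0)
    (hxb : x.factorization p ≤ b.factorization p) (n : ℕ) :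
    ((fun y => gcd b (y ^ k))^[n] x).factorization p =
      min (b.factorization p) (k ^ n * x.factorization p) := by
  induction n with
  | zero => simp [min_eq_right hxb]
  | succ n ih =>
    rw [Function.iterate_succ_apply', factorization_gcd_pow_apply hb
      (iterate_gcd_pow_ne_zero hb hx n), ih, min_mul_min_eq_min_mul, pow_succ', mul_assoc]

end Nat

theorem iterate_gcd_sq_factorization_general (a b : ℕ) (hb : 0 < b) (hab : a ∣ b) :
    ∀ (n : ℕ) (p : ℕ), p.Prime →
      ((fun x => Nat.gcd b (x ^ 2))^[n] (b / a)).factorization p =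
        min (b.factorization p) (2 ^ n * (b.factorization p - a.factorization p)) := by
  intro n p _
  have hquot : (b / a).factorization p = b.factorization p - a.factorization p := by
    rw [Nat.factorization_div hab]
    rfl
  have hquot_ne : b / a ≠ 0 :=
    (Nat.div_pos (Nat.le_of_dvd hb hab) (Nat.pos_of_dvd_of_pos hab hb)).ne'
  rw [Nat.factorization_iterate_gcd_pow hb.ne' hquot_ne (hquot ▸ Nat.sub_le _ _), hquot]

/-- for `0 < a ∣ b` and `f x = gcd(b, x²)`, the exponent of each prime `p` in
`f^[n](b/a)` equals `min(e_b(p), 2^n · (e_b(p) − e_a(p)))`. -/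
theorem iterate_gcd_sq_factorization (a b : ℕ) (ha : 0 < a) (hb : 0 < b) (hab : a ∣ b) :
    ∀ (n : ℕ) (p : ℕ), p.Prime →
      ((fun x => Nat.gcd b (x ^ 2))^[n] (b / a)).factorization p =
        min (b.factorization p) (2 ^ n * (b.factorization p - a.factorization p)) :=
  iterate_gcd_sq_factorization_general a b hb hab
end

section
/- For every positive integer p, the map D_p sending a permutation S to the submultiset of its elements that divide p is a semiring endomorphism of the semiring of permutations: D_p of the empty multiset is empty, D_p({1}) = {1}, D_p(A + B) = D_p(A) + D_p(B), and D_p(A·B) = D_p(A)·D_p(B) for all permutations A and B. -/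
/-- Product of permutations (multisets of cycle lengths): each pair `(a, b)` contributes
`gcd(a, b)` copies of `lcm(a, b)`. -/
def pmul (A B : Multiset ℕ) : Multiset ℕ :=
  A.bind fun a => B.bind fun b => Multiset.replicate (Nat.gcd a b) (Nat.lcm a b)

/-- A permutation is a multiset of positive natural numbers (cycle lengths). -/
def IsPerm (A : Multiset ℕ) : Prop := ∀ x ∈ A, 0 < x

/-- `dfil p A` is the submultiset of elements of `A` dividing `p`. -/
def dfil (p : ℕ) (A : Multiset ℕ) : Multiset ℕ := A.filter (· ∣ p)

theorem Multiset.filter_replicate {α : Type*} (q : α → Prop) [DecidablePred q] (n : ℕ) (a : α) :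
    (replicate n a).filter q = if q a then replicate n a else 0 := by
  split_ifs with h
  · exact filter_eq_self.2 fun x hx => eq_of_mem_replicate hx ▸ h
  · exact filter_eq_nil.2 fun x hx => eq_of_mem_replicate hx ▸ h

theorem dfil_add (p : ℕ) (A B : Multiset ℕ) : dfil p (A + B) = dfil p A + dfil p B :=
  Multiset.filter_add _ A B

/-- `lcm a b ∣ p` iff `a ∣ p` and `b ∣ p`, so a block `gcd a b • {lcm a b}` of `pmul A B`
survives `dfil p` exactly when both of its factors do. -/
theorem dfil_pmul (p : ℕ) (A B : Multiset ℕ) :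
    dfil p (pmul A B) = pmul (dfil p A) (dfil p B) := by
  simp only [dfil, pmul, Multiset.filter_bind, Multiset.bind_filter, Multiset.filter_replicate,
    Nat.lcm_dvd_iff]
  refine Multiset.bind_congr fun a _ => ?_
  by_cases ha : a ∣ p <;> simp [ha]

theorem dfil_semiring_hom_general (p : ℕ) :
    dfil p 0 = 0 ∧ dfil p {1} = {1} ∧
    (∀ A B : Multiset ℕ, IsPerm A → IsPerm B → dfil p (A + B) = dfil p A + dfil p B) ∧
    (∀ A B : Multiset ℕ, IsPerm A → IsPerm B →
      dfil p (pmul A B) = pmul (dfil p A) (dfil p B)) :=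
  ⟨Multiset.filter_zero _, (Multiset.filter_singleton _).trans (if_pos (one_dvd p)),
    fun A B _ _ => dfil_add p A B, fun A B _ _ => dfil_pmul p A B⟩

/-- for every positive `p`, the map `D_p` keeping only the cycle lengths
dividing `p` is a semiring endomorphism of the semiring of permutations. -/
theorem dfil_semiring_hom (p : ℕ) (hp : 0 < p) :
    dfil p 0 = 0 ∧ dfil p {1} = {1} ∧
    (∀ A B : Multiset ℕ, IsPerm A → IsPerm B → dfil p (A + B) = dfil p A + dfil p B) ∧
    (∀ A B : Multiset ℕ, IsPerm A → IsPerm B →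
      dfil p (pmul A B) = pmul (dfil p A) (dfil p B)) :=
  dfil_semiring_hom_general p
end

section
/- Let X be a nonempty permutation with elements listed in nondecreasing order x_1 ≤ x_2 ≤ … ≤ x_m, let k > 0 be an integer and let 0 ≤ i < m. Then (pref_i(X))^k is a submultiset of X^k, and the minimum element of the multiset difference X^k − (pref_i(X))^k equals x_{i+1}. -/
/-- Powers in the permutation semiring; `X^0` is the singleton `{1}`. -/
def ppow (A : Multiset ℕ) : ℕ → Multiset ℕ
  | 0 => {1}
  | n + 1 => pmul A (ppow A n)

/-!
Write `X = P + D` with `P = pref_i X`, so that every element of `D` is at least `x_{i+1}`.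
Expanding `(P + D)^k` gives `P^k + E`, where every element of `E` is an lcm involving a factor
from `D`, hence a (positive) multiple of an element of `D`, hence at least `x_{i+1}`.
Superadditivity `P^k + D^k ≤ (P + D)^k` puts `D^k` inside `E`, and `x_{i+1} ∈ D^k` because
`lcm(x, x) = x`.
-/

theorem List.Pairwise.getElem_le_of_mem_drop {α : Type*} [Preorder α] {l : List α}
    (hl : l.Pairwise (· ≤ ·)) {i : ℕ} (hi : i < l.length) {a : α} (ha : a ∈ l.drop i) :
    l[i] ≤ a := by
  have hdrop := hl.drop (i := i)
  rw [List.drop_eq_getElem_cons hi] at ha hdrop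
  rcases List.mem_cons.1 ha with rfl | ha
  · exact le_rfl
  · exact List.rel_of_pairwise_cons hdrop ha

open Multiset

theorem mem_pmul {A B : Multiset ℕ} {y : ℕ} :
    y ∈ pmul A B ↔ ∃ a ∈ A, ∃ b ∈ B, Nat.gcd a b ≠ 0 ∧ y = Nat.lcm a b := by
  simp only [pmul, mem_bind, mem_replicate]

theorem pmul_add_left (A B C : Multiset ℕ) : pmul (A + B) C = pmul A C + pmul B C :=
  add_bind ..

theorem pmul_add_right (A B C : Multiset ℕ) : pmul A (B + C) = pmul A B + pmul A C := by
  simp only [pmul, add_bind, bind_add]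

theorem pmul_le_pmul_right (A : Multiset ℕ) {B C : Multiset ℕ} (h : B ≤ C) :
    pmul A B ≤ pmul A C := by
  rw [← add_tsub_cancel_of_le h, pmul_add_right]
  exact le_self_add

theorem pmul_singleton_one (A : Multiset ℕ) : pmul A {1} = A := by
  simpa [pmul] using bind_singleton A id

theorem zero_notMem_ppow {A : Multiset ℕ} (hA : 0 ∉ A) (k : ℕ) : 0 ∉ ppow A k := by
  induction k with
  | zero => simp [ppow]
  | succ k ih =>
    rw [ppow, mem_pmul]
    rintro ⟨a, ha, b, hb, -, hab⟩
    rcases Nat.lcm_eq_zero_iff.1 hab.symm with rfl | rfl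
    exacts [hA ha, ih hb]

theorem mem_ppow_of_mem {A : Multiset ℕ} {x : ℕ} (hx : x ≠ 0) (hxA : x ∈ A) {k : ℕ}
    (hk : k ≠ 0) : x ∈ ppow A k := by
  induction k with
  | zero => contradiction
  | succ k ih =>
    rcases eq_or_ne k 0 with rfl | hk
    · rwa [ppow, ppow, pmul_singleton_one]
    · exact mem_pmul.2 ⟨x, hxA, x, ih hk, by simpa using hx, (Nat.lcm_self x).symm⟩

theorem ppow_add_ppow_le (A B : Multiset ℕ) {k : ℕ} (hk : k ≠ 0) :
    ppow A k + ppow B k ≤ ppow (A + B) k := by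
  induction k with
  | zero => contradiction
  | succ k ih =>
    rcases eq_or_ne k 0 with rfl | hk
    · simp only [ppow, pmul_singleton_one, le_rfl]
    calc ppow A (k + 1) + ppow B (k + 1) = pmul A (ppow A k) + pmul B (ppow B k) := rfl
      _ ≤ pmul A (ppow A k + ppow B k) + pmul B (ppow A k + ppow B k) := by
        rw [pmul_add_right, pmul_add_right]
        exact add_le_add le_self_add le_add_self
      _ = pmul (A + B) (ppow A k + ppow B k) := (pmul_add_left ..).symm
      _ ≤ ppow (A + B) (k + 1) := pmul_le_pmul_right _ (ih hk)

theorem exists_ppow_add_eq_add (P D : Multiset ℕ) (k : ℕ) :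
    ∃ E, ppow (P + D) k = ppow P k + E ∧ ∀ e ∈ E, ∃ d ∈ D, d ∣ e := by
  induction k with
  | zero => exact ⟨0, by simp [ppow]⟩
  | succ k ih =>
    obtain ⟨E, hE, hED⟩ := ih
    refine ⟨pmul P E + pmul D (ppow (P + D) k), ?_, ?_⟩
    · rw [ppow, ppow, pmul_add_left, hE, pmul_add_right, add_assoc]
    · intro e he
      rcases mem_add.1 he with he | he <;> obtain ⟨a, ha, b, hb, -, rfl⟩ := mem_pmul.1 he
      · obtain ⟨d, hd, hdb⟩ := hED b hb
        exact ⟨d, hd, hdb.trans (Nat.dvd_lcm_right a b)⟩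
      · exact ⟨a, ha, Nat.dvd_lcm_left a b⟩

/-- let `X` be a nonempty permutation whose elements, in nondecreasing order,
are given by the sorted list `l` (so `x_{i+1} = l.get i`), let `k > 0` and `i < m`.
Then `(pref_i X)^k` is a submultiset of `X^k`, and the minimum element of the multiset
difference `X^k − (pref_i X)^k` is `x_{i+1}`. -/
theorem ppow_prefix_min (l : List ℕ) (hl : l.Pairwise (· ≤ ·)) (hpos : ∀ x ∈ l, 0 < x)
    (k : ℕ) (hk : 0 < k) (i : ℕ) (hi : i < l.length) :
    ppow (↑(l.take i)) k ≤ ppow (↑l) k ∧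
    l.get ⟨i, hi⟩ ∈ ppow (↑l) k - ppow (↑(l.take i)) k ∧
    ∀ y ∈ ppow (↑l) k - ppow (↑(l.take i)) k, l.get ⟨i, hi⟩ ≤ y := by
  set P : Multiset ℕ := ↑(l.take i)
  set D : Multiset ℕ := ↑(l.drop i)
  have hl_eq : (↑l : Multiset ℕ) = P + D := by rw [coe_add, List.take_append_drop]
  have hxD : l[i] ∈ D := mem_coe.2 (List.drop_eq_getElem_cons hi ▸ List.mem_cons_self)
  have hx0 : l[i] ≠ 0 := (hpos _ (List.getElem_mem hi)).ne'
  obtain ⟨E, hE, hED⟩ := exists_ppow_add_eq_add P D k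
  rw [List.get_eq_getElem, hl_eq, hE, add_tsub_cancel_left]
  refine ⟨le_self_add, ?_, fun y hy => ?_⟩
  · have hDE : ppow D k ≤ E :=
      (add_le_add_iff_left _).1 (hE ▸ ppow_add_ppow_le P D hk.ne')
    exact mem_of_le hDE (mem_ppow_of_mem hx0 hxD hk.ne')
  · obtain ⟨d, hd, hdy⟩ := hED y hy
    have hy0 : y ≠ 0 := by
      rintro rfl
      have h0 : (0 : ℕ) ∉ (↑l : Multiset ℕ) := fun h => (hpos 0 h).false
      exact zero_notMem_ppow h0 k (by rw [hl_eq, hE]; exact mem_add.2 (.inr hy))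
    exact (hl.getElem_le_of_mem_drop hi hd).trans (Nat.le_of_dvd (Nat.pos_of_ne_zero hy0) hdy)
end

section
/- Let P(X) = Σ_{i=0}^k A_i X^i be a polynomial over the permutations such that at least one non-constant coefficient A_i with i ≥ 1 contains the element 1 (a fixed point). Then P is injective on the semiring of permutations: for all permutations X and Y, P(X) = P(Y) implies X = Y. -/
/-- Evaluation of the polynomial `Σ_{i=0}^m A_i X^i` over the permutation semiring. -/
def peval (A : ℕ → Multiset ℕ) (m : ℕ) (X : Multiset ℕ) : Multiset ℕ :=
  (Finset.range (m + 1)).sum fun i => pmul (A i) (ppow X i)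

/-! For every `d`, the number `N_d(X) = Σ_{a ∈ X, a ∣ d} a` of fixed points of `X^d` is a
semiring homomorphism from permutations to `ℕ`: the `gcd a b` cycles of length `lcm a b` in the
product of an `a`-cycle and a `b`-cycle are fixed by the `d`-th power exactly when both factors
are. Hence `N_d(P(X)) = Σ N_d(A_i) N_d(X)^i`, a polynomial with natural coefficients which is
strictly increasing because `N_d(A_j) ≥ 1` for the `j ≥ 1` with `1 ∈ A_j`; so `P(X) = P(Y)` forces
`N_d(X) = N_d(Y)` for all `d`. Finally `N_d(X) = Σ_{e ∣ d} e · #{cycles of length e}`, so the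
cycle multiplicities are recovered by strong induction on `e`.
-/

lemma strictMono_sum_mul_pow (c : ℕ → ℕ) {k j : ℕ} (hj : j ≠ 0) (hjk : j ≤ k) (hc : 0 < c j) :
    StrictMono fun x : ℕ => ∑ i ∈ Finset.range (k + 1), c i * x ^ i := by
  intro x y hxy
  apply Finset.sum_lt_sum
  · exact fun i _ => Nat.mul_le_mul_left _ (Nat.pow_le_pow_left hxy.le i)
  · exact ⟨j, Finset.mem_range.mpr (by omega),
      Nat.mul_lt_mul_of_pos_left (Nat.pow_lt_pow_left hxy hj) hc⟩

/-- Number of fixed points of the `d`-th power of the permutation with cycle lengths `X`. -/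
def fixedPointCount (d : ℕ) : Multiset ℕ →+ ℕ :=
  Multiset.sumAddMonoidHom.comp (Multiset.mapAddMonoidHom fun a => if a ∣ d then a else 0)

lemma fixedPointCount_apply (d : ℕ) (X : Multiset ℕ) :
    fixedPointCount d X = (X.map fun a => if a ∣ d then a else 0).sum := rfl

lemma fixedPointCount_replicate (d n a : ℕ) :
    fixedPointCount d (Multiset.replicate n a) = n * if a ∣ d then a else 0 := by
  simp [fixedPointCount_apply, Multiset.map_replicate]

lemma fixedPointCount_bind {α : Type*} (d : ℕ) (s : Multiset α) (f : α → Multiset ℕ) :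
    fixedPointCount d (s.bind f) = (s.map fun a => fixedPointCount d (f a)).sum := by
  simp [fixedPointCount_apply, Multiset.map_bind]

lemma gcd_mul_ite_lcm_dvd (d a b : ℕ) :
    Nat.gcd a b * (if Nat.lcm a b ∣ d then Nat.lcm a b else 0)
      = (if a ∣ d then a else 0) * (if b ∣ d then b else 0) := by
  by_cases ha : a ∣ d <;> by_cases hb : b ∣ d <;>
    simp [Nat.lcm_dvd_iff, ha, hb, Nat.gcd_mul_lcm]

lemma fixedPointCount_pmul (d : ℕ) (A B : Multiset ℕ) :
    fixedPointCount d (pmul A B) = fixedPointCount d A * fixedPointCount d B := by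
  simp only [pmul, fixedPointCount_bind, fixedPointCount_replicate, gcd_mul_ite_lcm_dvd,
    Multiset.sum_map_mul_left, Multiset.sum_map_mul_right]
  rfl

lemma fixedPointCount_ppow (d : ℕ) (X : Multiset ℕ) (n : ℕ) :
    fixedPointCount d (ppow X n) = fixedPointCount d X ^ n := by
  induction n with
  | zero => simp [ppow, fixedPointCount_apply]
  | succ n ih => rw [ppow, fixedPointCount_pmul, ih, pow_succ']

lemma fixedPointCount_peval (d : ℕ) (A : ℕ → Multiset ℕ) (m : ℕ) (X : Multiset ℕ) :
    fixedPointCount d (peval A m X)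
      = ∑ i ∈ Finset.range (m + 1), fixedPointCount d (A i) * fixedPointCount d X ^ i := by
  simp only [peval, map_sum, fixedPointCount_pmul, fixedPointCount_ppow]

lemma le_fixedPointCount_of_mem {d a : ℕ} {X : Multiset ℕ} (ha : a ∈ X) (hd : a ∣ d) :
    a ≤ fixedPointCount d X := by
  have h := Multiset.le_sum_of_mem (Multiset.mem_map_of_mem (fun a => if a ∣ d then a else 0) ha)
  rwa [if_pos hd] at h

lemma fixedPointCount_eq_sum_divisors {d : ℕ} (hd : d ≠ 0) (X : Multiset ℕ) :
    fixedPointCount d X = ∑ e ∈ d.divisors, e * X.count e := by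
  induction X using Multiset.induction with
  | empty => simp
  | cons a X ih =>
    have hcons : fixedPointCount d (a ::ₘ X) = (if a ∣ d then a else 0) + fixedPointCount d X := by
      simp [fixedPointCount_apply]
    simp only [hcons, ih, Multiset.count_cons, mul_add, Finset.sum_add_distrib, mul_ite, mul_one,
      mul_zero, Finset.sum_ite_eq', Nat.mem_divisors, ne_eq, hd, not_false_eq_true, and_true]
    exact add_comm _ _

lemma count_eq_of_fixedPointCount_eq {X Y : Multiset ℕ}
    (h : ∀ d ≠ 0, fixedPointCount d X = fixedPointCount d Y) : ∀ e ≠ 0, X.count e = Y.count e := by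
  intro e
  induction e using Nat.strong_induction_on with
  | _ e ih =>
    intro he
    have hsplit := h e he
    rw [fixedPointCount_eq_sum_divisors he, fixedPointCount_eq_sum_divisors he,
      ← Nat.cons_self_properDivisors he, Finset.sum_cons, Finset.sum_cons,
      Finset.sum_congr rfl fun e' he' => by
        rw [ih e' (Nat.mem_properDivisors.mp he').2 (Nat.pos_of_mem_properDivisors he').ne']]
      at hsplit
    exact Nat.eq_of_mul_eq_mul_left (Nat.pos_of_ne_zero he) (Nat.add_right_cancel hsplit)

lemma eq_of_fixedPointCount_eq {X Y : Multiset ℕ} (hX : IsPerm X) (hY : IsPerm Y)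
    (h : ∀ d ≠ 0, fixedPointCount d X = fixedPointCount d Y) : X = Y := by
  ext e
  rcases eq_or_ne e 0 with rfl | he
  · rw [Multiset.count_eq_zero.mpr fun h0 => (hX 0 h0).ne rfl,
      Multiset.count_eq_zero.mpr fun h0 => (hY 0 h0).ne rfl]
  · exact count_eq_of_fixedPointCount_eq h e he

theorem peval_injective_of_fixpoint_general (A : ℕ → Multiset ℕ) (k : ℕ)
    (hfix : ∃ i, 1 ≤ i ∧ i ≤ k ∧ (1 : ℕ) ∈ A i) :
    ∀ X Y : Multiset ℕ, IsPerm X → IsPerm Y → peval A k X = peval A k Y → X = Y := by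
  intro X Y hX hY hP
  obtain ⟨j, hj, hjk, hjfix⟩ := hfix
  refine eq_of_fixedPointCount_eq hX hY fun d _ => ?_
  apply (strictMono_sum_mul_pow (fun i => fixedPointCount d (A i)) (by omega) hjk
    (le_fixedPointCount_of_mem hjfix (one_dvd d))).injective
  simp only [← fixedPointCount_peval, hP]

/-- a polynomial `P(X) = Σ_{i=0}^k A_i X^i` over the permutations with a
fixed point (the element `1`) in some non-constant coefficient is injective over the
semiring of permutations. -/
theorem peval_injective_of_fixpoint (A : ℕ → Multiset ℕ) (k : ℕ)
    (hA : ∀ i ≤ k, IsPerm (A i)) (hfix : ∃ i, 1 ≤ i ∧ i ≤ k ∧ (1 : ℕ) ∈ A i) :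
    ∀ X Y : Multiset ℕ, IsPerm X → IsPerm Y → peval A k X = peval A k Y → X = Y :=
  peval_injective_of_fixpoint_general A k hfix
end

section
/- Let P(X) = Σ_{i=0}^m A_i X^i be a polynomial over the permutations such that every element of every non-constant coefficient A_i with i ≥ 1 is at least 2 (i.e., no non-constant coefficient contains a fixed point). Then P is not injective on the semiring of permutations: there exist two distinct permutations X and Y such that P(X) = P(Y). -/
/-- `fixCard d A` is the number of points fixed by the `d`-th power of the permutation `A`. -/
def fixCard (d : ℕ) : Multiset ℕ →+ ℕ :=
  Multiset.sumAddMonoidHom.comp (Multiset.mapAddMonoidHom fun a => if a ∣ d then a else 0)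

lemma fixCard_apply (d : ℕ) (A : Multiset ℕ) :
    fixCard d A = (A.map fun a => if a ∣ d then a else 0).sum := rfl

lemma fixCard_singleton (a d : ℕ) : fixCard d {a} = if a ∣ d then a else 0 := by
  simp [fixCard_apply]

lemma fixCard_bind (d : ℕ) (A : Multiset ℕ) (f : ℕ → Multiset ℕ) :
    fixCard d (A.bind f) = (A.map fun a => fixCard d (f a)).sum := by
  rw [Multiset.bind, Multiset.join, map_multiset_sum, Multiset.map_map]
  rfl

lemma fixCard_replicate_gcd_lcm (a b d : ℕ) :
    fixCard d (Multiset.replicate (a.gcd b) (a.lcm b)) = fixCard d {a} * fixCard d {b} := by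
  rw [← Multiset.nsmul_singleton, map_nsmul, fixCard_singleton, fixCard_singleton,
    fixCard_singleton, smul_eq_mul]
  simp only [Nat.lcm_dvd_iff]
  split_ifs <;> simp_all [Nat.gcd_mul_lcm]

lemma fixCard_pmul (d : ℕ) (A B : Multiset ℕ) : fixCard d (pmul A B) = fixCard d A * fixCard d B := by
  simp only [pmul, fixCard_bind, fixCard_replicate_gcd_lcm, Multiset.sum_map_mul_left,
    Multiset.sum_map_mul_right]
  simp [fixCard_apply]

lemma fixCard_ppow (d : ℕ) (X : Multiset ℕ) (n : ℕ) : fixCard d (ppow X n) = fixCard d X ^ n := by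
  induction n with
  | zero => simp [ppow, fixCard_singleton]
  | succ n ih => rw [ppow, fixCard_pmul, ih, pow_succ']

lemma exists_dvd_of_fixCard_ne_zero {d : ℕ} {A : Multiset ℕ} (h : fixCard d A ≠ 0) :
    ∃ a ∈ A, a ∣ d := by
  contrapose! h
  rw [fixCard_apply]
  exact Multiset.sum_eq_zero fun x hx => by
    obtain ⟨a, ha, rfl⟩ := Multiset.mem_map.mp hx
    exact if_neg (h a ha)

lemma fixCard_eq_sum_divisors {d : ℕ} (hd : d ≠ 0) (A : Multiset ℕ) :
    fixCard d A = ∑ a ∈ d.divisors, a * A.count a := by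
  induction A using Multiset.induction_on with
  | empty => simp
  | cons a A ih =>
    simp only [← Multiset.singleton_add, map_add, ih, fixCard_singleton, Multiset.count_add,
      Multiset.count_singleton, mul_add, Finset.sum_add_distrib, mul_ite, mul_one, mul_zero,
      Finset.sum_ite_eq', Nat.mem_divisors, ne_eq, hd, not_false_eq_true, and_true]

lemma eq_of_fixCard_eq {A B : Multiset ℕ} (hA : IsPerm A) (hB : IsPerm B)
    (h : ∀ d ≠ 0, fixCard d A = fixCard d B) : A = B := by
  refine Multiset.ext.mpr fun n => ?_
  induction n using Nat.strong_induction_on with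
  | _ n ih =>
    rcases Nat.eq_zero_or_pos n with rfl | hn
    · rw [Multiset.count_eq_zero.mpr fun h0 => (hA 0 h0).false,
        Multiset.count_eq_zero.mpr fun h0 => (hB 0 h0).false]
    · have hsum := h n hn.ne'
      rw [fixCard_eq_sum_divisors hn.ne', fixCard_eq_sum_divisors hn.ne',
        ← Nat.cons_self_properDivisors hn.ne', Finset.sum_cons, Finset.sum_cons,
        Finset.sum_congr rfl fun a ha => by rw [ih a (Nat.mem_properDivisors.mp ha).2]] at hsum
      exact Nat.eq_of_mul_eq_mul_left hn (Nat.add_right_cancel hsum)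

lemma IsPerm.add {A B : Multiset ℕ} (hA : IsPerm A) (hB : IsPerm B) : IsPerm (A + B) :=
  fun x hx => (Multiset.mem_add.mp hx).elim (hA x) (hB x)

lemma IsPerm.nsmul {A : Multiset ℕ} (hA : IsPerm A) (n : ℕ) : IsPerm (n • A) :=
  fun x hx => hA x (Multiset.mem_nsmul.mp hx).2

lemma IsPerm.pmul {A B : Multiset ℕ} (hA : IsPerm A) (hB : IsPerm B) : IsPerm (pmul A B) := by
  intro x hx
  obtain ⟨a, ha, hx⟩ := Multiset.mem_bind.mp hx
  obtain ⟨b, hb, hx⟩ := Multiset.mem_bind.mp hx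
  rw [Multiset.eq_of_mem_replicate hx]
  exact Nat.pos_of_ne_zero (Nat.lcm_ne_zero (hA a ha).ne' (hB b hb).ne')

lemma isPerm_singleton {a : ℕ} (ha : 0 < a) : IsPerm {a} :=
  fun _ hx => Multiset.mem_singleton.mp hx ▸ ha

lemma IsPerm.ppow {X : Multiset ℕ} (hX : IsPerm X) (n : ℕ) : IsPerm (ppow X n) := by
  induction n with
  | zero => exact isPerm_singleton one_pos
  | succ n ih => exact hX.pmul ih

lemma isPerm_sum {s : Finset ℕ} {f : ℕ → Multiset ℕ} (hf : ∀ i ∈ s, IsPerm (f i)) :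
    IsPerm (∑ i ∈ s, f i) := fun x hx =>
  let ⟨i, hi, hx⟩ := Multiset.mem_sum.mp hx
  hf i hi x hx

/-- The positive and negative parts `(X, Y)` of the formal product `∏_{e ∈ l} (e • {1} - {e})`:
multiplying by `e • {1} - {e}` sends `(X, Y)` to `(e • X + {e} Y, e • Y + {e} X)`. -/
def prodParts : List ℕ → Multiset ℕ × Multiset ℕ
  | [] => ({1}, 0)
  | e :: l => (e • (prodParts l).1 + pmul {e} (prodParts l).2,
      e • (prodParts l).2 + pmul {e} (prodParts l).1)

lemma isPerm_prodParts {l : List ℕ} (hl : ∀ e ∈ l, 0 < e) :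
    IsPerm (prodParts l).1 ∧ IsPerm (prodParts l).2 := by
  induction l with
  | nil => exact ⟨isPerm_singleton one_pos, fun x hx => absurd hx (Multiset.notMem_zero x)⟩
  | cons e l ih =>
    have he := isPerm_singleton (hl e List.mem_cons_self)
    obtain ⟨hX, hY⟩ := ih fun x hx => hl x (List.mem_cons_of_mem e hx)
    exact ⟨(hX.nsmul e).add (he.pmul hY), (hY.nsmul e).add (he.pmul hX)⟩

lemma fixCard_prodParts (l : List ℕ) (d : ℕ) :
    fixCard d (prodParts l).1 =
      fixCard d (prodParts l).2 + (l.map fun e => if e ∣ d then 0 else e).prod := by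
  induction l with
  | nil => simp [prodParts, fixCard_singleton]
  | cons e l ih =>
    simp only [prodParts, map_add, map_nsmul, fixCard_pmul, fixCard_singleton, List.map_cons,
      List.prod_cons, ih, smul_eq_mul]
    split_ifs <;> ring

lemma fixCard_prodParts_of_dvd {l : List ℕ} {e d : ℕ} (he : e ∈ l) (hd : e ∣ d) :
    fixCard d (prodParts l).1 = fixCard d (prodParts l).2 := by
  have hzero : 0 ∈ l.map fun e => if e ∣ d then 0 else e := List.mem_map.mpr ⟨e, he, if_pos hd⟩
  rw [fixCard_prodParts, List.prod_eq_zero hzero, add_zero]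

lemma prodParts_fst_ne_snd {l : List ℕ} (hl : ∀ e ∈ l, 2 ≤ e) :
    (prodParts l).1 ≠ (prodParts l).2 := by
  intro h
  have h1 := fixCard_prodParts l 1
  rw [h, left_eq_add] at h1
  refine (List.prod_pos fun x hx => ?_).ne' h1
  obtain ⟨e, he, rfl⟩ := List.mem_map.mp hx
  have := hl e he
  rw [if_neg (by simpa using (show e ≠ 1 by omega))]
  omega

lemma sum_pmul_ppow_succ_eq {B : ℕ → Multiset ℕ} {s : Finset ℕ} (hB : ∀ i ∈ s, IsPerm (B i))
    {X Y : Multiset ℕ} (hX : IsPerm X) (hY : IsPerm Y)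
    (hXY : ∀ d, ∀ i ∈ s, ∀ a ∈ B i, a ∣ d → fixCard d X = fixCard d Y) :
    ∑ i ∈ s, pmul (B i) (ppow X (i + 1)) = ∑ i ∈ s, pmul (B i) (ppow Y (i + 1)) := by
  refine eq_of_fixCard_eq (isPerm_sum fun i hi => (hB i hi).pmul (hX.ppow _))
    (isPerm_sum fun i hi => (hB i hi).pmul (hY.ppow _)) fun d _ => ?_
  simp only [map_sum, fixCard_pmul, fixCard_ppow]
  refine Finset.sum_congr rfl fun i hi => ?_
  by_cases h0 : fixCard d (B i) = 0
  · simp [h0]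
  · obtain ⟨a, ha, had⟩ := exists_dvd_of_fixCard_ne_zero h0
    rw [hXY d i hi a ha had]

theorem peval_not_injective_of_no_fixpoint_general (A : ℕ → Multiset ℕ) (m : ℕ)
    (h2 : ∀ i, 1 ≤ i → i ≤ m → ∀ x ∈ A i, 2 ≤ x) :
    ∃ X Y : Multiset ℕ, IsPerm X ∧ IsPerm Y ∧ X ≠ Y ∧ peval A m X = peval A m Y := by
  have hA : ∀ i ∈ Finset.range m, ∀ x ∈ A (i + 1), 2 ≤ x := fun i hi =>
    h2 (i + 1) (Nat.le_add_left 1 i) (Finset.mem_range.mp hi)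
  set l := (∑ i ∈ Finset.range m, A (i + 1)).toList
  have hmem : ∀ i ∈ Finset.range m, ∀ a ∈ A (i + 1), a ∈ l := fun i hi a ha =>
    Multiset.mem_toList.mpr (Multiset.mem_sum.mpr ⟨i, hi, ha⟩)
  have hl : ∀ e ∈ l, 2 ≤ e := fun e he =>
    let ⟨i, hi, he⟩ := Multiset.mem_sum.mp (Multiset.mem_toList.mp he)
    hA i hi e he
  obtain ⟨hX, hY⟩ := isPerm_prodParts fun e he => (hl e he).trans_lt' two_pos
  refine ⟨_, _, hX, hY, prodParts_fst_ne_snd hl, ?_⟩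
  rw [peval, peval, Finset.sum_range_succ', Finset.sum_range_succ',
    sum_pmul_ppow_succ_eq (fun i hi x hx => (hA i hi x hx).trans_lt' two_pos) hX hY
      fun d i hi a ha had => fixCard_prodParts_of_dvd (hmem i hi a ha) had]
  -- both constant terms are `pmul (A 0) {1}`
  rfl

/-- a polynomial `P(X) = Σ_{i=0}^m A_i X^i` over the permutations whose
non-constant coefficients contain no fixed point (all their elements are at least `2`)
is not injective over the semiring of permutations. -/
theorem peval_not_injective_of_no_fixpoint (A : ℕ → Multiset ℕ) (m : ℕ)
    (hA : ∀ i ≤ m, IsPerm (A i)) (h2 : ∀ i, 1 ≤ i → i ≤ m → ∀ x ∈ A i, 2 ≤ x) :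
    ∃ X Y : Multiset ℕ, IsPerm X ∧ IsPerm Y ∧ X ≠ Y ∧ peval A m X = peval A m Y :=
  peval_not_injective_of_no_fixpoint_general A m h2
end

section
/- Let A and X be permutations with A pseudo-cancelable and X nonempty, let B = A·X, and set m = alcm_{ℓ(A)} ℓ(B) (note that ℓ(A) divides ℓ(B)). Let d be a divisor of ℓ(A) that is coprime with m. Then for every divisor e of d, A·(X + {d·m}) = A·(X + e copies of the singleton {(d/e)·m}), where + denotes multiset union. -/
/-- `ell X` is the minimum element of the (nonempty) multiset `X`. -/
noncomputable def ell (X : Multiset ℕ) : ℕ := sInf {x : ℕ | x ∈ X}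

/-- A nonempty permutation `A` is pseudo-cancelable if every element of `A` is a
multiple of its minimum `ell A`. -/
def PseudoCancelable (A : Multiset ℕ) : Prop := A ≠ 0 ∧ ∀ x ∈ A, ell A ∣ x

theorem Nat.lcm_mul_left_of_dvd_of_coprime {a f m : ℕ} (hf : f ∣ a) (hfm : f.Coprime m) :
    Nat.lcm a (f * m) = Nat.lcm a m := by
  rw [← hfm.lcm_eq_mul, ← Nat.lcm_assoc, Nat.lcm_eq_left hf]

theorem Nat.gcd_mul_left_of_dvd_of_coprime {a f m : ℕ} (hf : f ∣ a) (hfm : f.Coprime m) :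
    Nat.gcd a (f * m) = f * Nat.gcd a m := by
  rw [hfm.gcd_mul, Nat.gcd_eq_right hf]

theorem Multiset.bind_nsmul {α β : Type*} (s : Multiset α) (n : ℕ) (g : α → Multiset β) :
    s.bind (fun a => n • g a) = n • s.bind g := by
  simp only [Multiset.bind, Multiset.join, Multiset.smul_sum, Multiset.map_map]
  rfl

theorem pmul_add (A X Y : Multiset ℕ) : pmul A (X + Y) = pmul A X + pmul A Y := by
  simp only [pmul, Multiset.add_bind, Multiset.bind_add]

theorem pmul_replicate (A : Multiset ℕ) (e b : ℕ) :
    pmul A (Multiset.replicate e b) = e • pmul A {b} := by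
  induction e with
  | zero => simp [pmul]
  | succ n ih =>
    rw [Multiset.replicate_succ, ← Multiset.singleton_add, pmul_add, ih, succ_nsmul, add_comm]

theorem pmul_singleton_mul_of_coprime {A : Multiset ℕ} {f : ℕ} (hA : ∀ a ∈ A, f ∣ a)
    {m : ℕ} (hfm : f.Coprime m) : pmul A {f * m} = f • pmul A {m} := by
  simp only [pmul, Multiset.singleton_bind, ← Multiset.bind_nsmul, Multiset.nsmul_replicate]
  refine Multiset.bind_congr fun a ha => ?_
  rw [Nat.gcd_mul_left_of_dvd_of_coprime (hA a ha) hfm,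
    Nat.lcm_mul_left_of_dvd_of_coprime (hA a ha) hfm]

theorem pmul_singleton_eq_pmul_replicate {A : Multiset ℕ} {d : ℕ} (hA : ∀ a ∈ A, d ∣ a)
    {m : ℕ} (hdm : d.Coprime m) {e : ℕ} (he : e ∣ d) :
    pmul A {d * m} = pmul A (Multiset.replicate e (d / e * m)) := by
  have hde : d / e ∣ d := Nat.div_dvd_of_dvd he
  rw [pmul_replicate, pmul_singleton_mul_of_coprime hA hdm,
    pmul_singleton_mul_of_coprime (fun a ha => hde.trans (hA a ha)) (hdm.coprime_dvd_left hde),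
    smul_smul, Nat.mul_div_cancel' he]

theorem exchange_cycles_general (A X : Multiset ℕ)
    (hpc : PseudoCancelable A)
    (d : ℕ) (hd : d ∣ ell A)
    (hcop : Nat.Coprime d (alcm (ell A) (ell (pmul A X)))) :
    ∀ e : ℕ, e ∣ d →
      pmul A (X + {d * alcm (ell A) (ell (pmul A X))}) =
        pmul A (X + Multiset.replicate e (d / e * alcm (ell A) (ell (pmul A X)))) := by
  intro e he
  have hdA : ∀ a ∈ A, d ∣ a := fun a ha => hd.trans (hpc.2 a ha)
  rw [pmul_add, pmul_add, pmul_singleton_eq_pmul_replicate hdA hcop he]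

/-- let `A` be pseudo-cancelable, `X` a nonempty permutation, `B = A·X`,
`m' = alcm_{ℓ(A)} ℓ(B)`, and let `d ∣ ℓ(A)` be coprime with `m'`. Then for every divisor
`e` of `d`, `A·(X + {d·m'}) = A·(X + e copies of {(d/e)·m'})`. -/
theorem exchange_cycles (A X : Multiset ℕ) (hA : IsPerm A) (hX : IsPerm X)
    (hpc : PseudoCancelable A) (hXne : X ≠ 0)
    (d : ℕ) (hd : d ∣ ell A)
    (hcop : Nat.Coprime d (alcm (ell A) (ell (pmul A X)))) :
    ∀ e : ℕ, e ∣ d →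
      pmul A (X + {d * alcm (ell A) (ell (pmul A X))}) =
        pmul A (X + Multiset.replicate e (d / e * alcm (ell A) (ell (pmul A X)))) :=
  exchange_cycles_general A X hpc d hd hcop
end

section
/- Let P(X) = Σ_{i=0}^m A_i X^i be a pseudo-injective polynomial over the permutations with seed g, let b be a positive integer divisible by g, and set m' = alcm_g b. Let d be a divisor of g coprime with m'. Then for every permutation X and every divisor e of d, P(X + {d·m'}) = P(X + e copies of the singleton {(d/e)·m'}), where + denotes multiset union. In particular, P(X + {d·m'}) = B if and only if P(X + e copies of {(d/e)·m'}) = B for every divisor e of d. -/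
/-- `P = Σ_{i=0}^m A_i X^i` is pseudo-injective with seed `g`: `g` occurs as an element of
some non-constant coefficient and divides every element of every non-constant coefficient
(hence `g` is the minimum element occurring among the non-constant coefficients). -/
def PseudoInjective (A : ℕ → Multiset ℕ) (m g : ℕ) : Prop :=
  (∃ i, 1 ≤ i ∧ i ≤ m ∧ g ∈ A i) ∧ ∀ i, 1 ≤ i → i ≤ m → ∀ x ∈ A i, g ∣ x

/-! If `d ∣ w` and `d` is coprime with `m'`, then for `c ∣ d` we have
`gcd(w, c·m') = c·gcd(w, m')` and `lcm(w, c·m') = lcm(w, m')`, so a single cycle `w` multiplies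
`{c·m'}` like `c` copies of `{m'}`; in particular it cannot tell `{d·m'}` from `e` copies of
`{(d/e)·m'}`. Multiplying by `{w}` only creates lengths divisible by `w`, so by induction this
persists through every power of `X + {d·m'}`; and the non-constant coefficients of a
pseudo-injective polynomial consist of multiples of the seed, hence of `d`. -/

namespace Multiset

theorem replicate_bind {α β : Type*} (n : ℕ) (a : α) (f : α → Multiset β) :
    (replicate n a).bind f = n • f a := by
  simp [bind, join, sum_replicate]

theorem bind_nsmul_s17 {α β : Type*} (n : ℕ) (s : Multiset α) (f : α → Multiset β) :
    (s.bind fun a => n • f a) = n • s.bind f := by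
  simp [bind, join, sum_map_nsmul]

end Multiset

theorem Nat.gcd_mul_gcd_lcm_comm (a b c : ℕ) :
    gcd a b * gcd (lcm a b) c = gcd b c * gcd a (lcm b c) := by
  rcases Nat.eq_zero_or_pos a with rfl | ha
  · simp [Nat.gcd_mul_lcm]
  rcases Nat.eq_zero_or_pos b with rfl | hb
  · simp [mul_comm]
  rcases Nat.eq_zero_or_pos c with rfl | hc
  · simp [mul_comm]
  have h₁ : gcd a b * gcd (lcm a b) c * lcm a (lcm b c) = a * b * c := by
    rw [← Nat.lcm_assoc, mul_assoc, Nat.gcd_mul_lcm, ← mul_assoc, Nat.gcd_mul_lcm]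
  have h₂ : gcd b c * gcd a (lcm b c) * lcm a (lcm b c) = a * b * c := by
    rw [mul_assoc, Nat.gcd_mul_lcm, mul_left_comm, Nat.gcd_mul_lcm, mul_assoc]
  exact Nat.eq_of_mul_eq_mul_right (Nat.lcm_pos ha (Nat.lcm_pos hb hc)) (h₁.trans h₂.symm)

section Pmul

open Multiset

theorem pmul_singleton_left (a : ℕ) (B : Multiset ℕ) :
    pmul {a} B = B.bind fun b => replicate (Nat.gcd a b) (Nat.lcm a b) := by
  simp [pmul]

theorem pmul_eq_bind_singleton (A B : Multiset ℕ) : pmul A B = A.bind fun a => pmul {a} B := by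
  simp [pmul]

theorem pmul_replicate_right (A : Multiset ℕ) (e x : ℕ) :
    pmul A (replicate e x) = e • pmul A {x} := by
  simp only [pmul, replicate_bind, singleton_bind, bind_nsmul_s17]

theorem dvd_of_mem_pmul_singleton_left {u v : ℕ} {B : Multiset ℕ} (hv : v ∈ pmul {u} B) :
    u ∣ v := by
  obtain ⟨b, -, hv⟩ := mem_bind.1 ((pmul_singleton_left u B) ▸ hv)
  exact eq_of_mem_replicate hv ▸ Nat.dvd_lcm_left u b

theorem pmul_singleton_left_assoc (a : ℕ) (B C : Multiset ℕ) :
    pmul (pmul {a} B) C = pmul {a} (pmul B C) := by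
  simp only [pmul, singleton_bind, bind_assoc, replicate_bind, ← bind_nsmul_s17, nsmul_replicate]
  refine bind_congr fun b _ => bind_congr fun c _ => ?_
  rw [Nat.lcm_assoc, Nat.gcd_mul_gcd_lcm_comm]

theorem pmul_singleton_mul_of_coprime_s17 {w c n : ℕ} (hcw : c ∣ w) (hcop : Nat.Coprime c n) :
    pmul {w} {c * n} = c • pmul {w} {n} := by
  have hgcd : Nat.gcd w (c * n) = c * Nat.gcd w n := by
    obtain ⟨w', rfl⟩ := hcw
    rw [Nat.gcd_mul_left, Nat.Coprime.gcd_mul_left_cancel w' hcop]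
  have hlcm : Nat.lcm w (c * n) = Nat.lcm w n := by
    rw [← hcop.lcm_eq_mul, ← Nat.lcm_assoc, Nat.lcm_eq_left hcw]
  simp only [pmul_singleton_left, singleton_bind, nsmul_replicate, hgcd, hlcm]

theorem pmul_singleton_replicate_div {w d n e : ℕ} (hdw : d ∣ w) (hcop : Nat.Coprime d n)
    (he : e ∣ d) : pmul {w} (replicate e (d / e * n)) = pmul {w} {d * n} := by
  have hde : d / e ∣ d := Nat.div_dvd_of_dvd he
  rw [pmul_replicate_right, pmul_singleton_mul_of_coprime_s17 (hde.trans hdw)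
      (hcop.coprime_dvd_left hde), smul_smul, Nat.mul_div_cancel' he,
    pmul_singleton_mul_of_coprime_s17 hdw hcop]

theorem pmul_singleton_ppow_add_congr {d : ℕ} {Y Y' : Multiset ℕ}
    (hY : ∀ u, d ∣ u → pmul {u} Y = pmul {u} Y') (X : Multiset ℕ) (k : ℕ) {u : ℕ}
    (hu : d ∣ u) : pmul {u} (ppow (X + Y) k) = pmul {u} (ppow (X + Y') k) := by
  induction k generalizing u with
  | zero => rfl
  | succ k ih =>
    have unfold_succ : ∀ Z, pmul {u} (ppow (X + Z) (k + 1)) =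
        pmul (pmul {u} X + pmul {u} Z) (ppow (X + Z) k) := fun Z => by
      rw [ppow, ← pmul_singleton_left_assoc, pmul_add_right]
    rw [unfold_succ, unfold_succ, hY u hu, pmul_eq_bind_singleton,
      pmul_eq_bind_singleton _ (ppow (X + Y') k)]
    refine bind_congr fun v hv => ih (hu.trans ?_)
    rcases mem_add.1 hv with hv | hv <;> exact dvd_of_mem_pmul_singleton_left hv

theorem peval_add_congr {A : ℕ → Multiset ℕ} {m d : ℕ}
    (hA : ∀ i, 1 ≤ i → i ≤ m → ∀ a ∈ A i, d ∣ a) {Y Y' : Multiset ℕ}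
    (hY : ∀ u, d ∣ u → pmul {u} Y = pmul {u} Y') (X : Multiset ℕ) :
    peval A m (X + Y) = peval A m (X + Y') := by
  refine Finset.sum_congr rfl fun i hi => ?_
  rcases Nat.eq_zero_or_pos i with rfl | hi₀
  · rfl
  rw [pmul_eq_bind_singleton, pmul_eq_bind_singleton (A i)]
  exact bind_congr fun a ha => pmul_singleton_ppow_add_congr hY X i
    (hA i hi₀ (Nat.lt_succ_iff.1 (Finset.mem_range.1 hi)) a ha)

end Pmul

theorem exchange_cycles_poly_general (A : ℕ → Multiset ℕ) (m g : ℕ)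
    (hpi : PseudoInjective A m g) (b : ℕ)
    (d : ℕ) (hd : d ∣ g) (hcop : Nat.Coprime d (alcm g b)) :
    (∀ X : Multiset ℕ, IsPerm X → ∀ e : ℕ, e ∣ d →
      peval A m (X + {d * alcm g b}) =
        peval A m (X + Multiset.replicate e (d / e * alcm g b))) ∧
    ∀ (X : Multiset ℕ), IsPerm X → ∀ B : Multiset ℕ,
      (peval A m (X + {d * alcm g b}) = B ↔
        ∀ e : ℕ, e ∣ d →
          peval A m (X + Multiset.replicate e (d / e * alcm g b)) = B) := by
  have exchange (X : Multiset ℕ) (e : ℕ) (he : e ∣ d) :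
      peval A m (X + {d * alcm g b}) =
        peval A m (X + Multiset.replicate e (d / e * alcm g b)) :=
    peval_add_congr (fun i hi him a ha => hd.trans (hpi.2 i hi him a ha))
      (fun _ hu => (pmul_singleton_replicate_div hu hcop he).symm) X
  refine ⟨fun X _ e he => exchange X e he,
    fun X _ B => ⟨fun h e he => (exchange X e he).symm.trans h, fun h => ?_⟩⟩
  exact (exchange X 1 (one_dvd d)).trans (h 1 (one_dvd d))

/-- let `P(X) = Σ_{i=0}^m A_i X^i` be pseudo-injective with seed `g`, let
`b > 0` with `g ∣ b`, set `m' = alcm_g b`, and let `d ∣ g` be coprime with `m'`. Then for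
every permutation `X` and every divisor `e` of `d`,
`P(X + {d·m'}) = P(X + e copies of {(d/e)·m'})`; in particular `P(X + {d·m'}) = B` iff
`P(X + e copies of {(d/e)·m'}) = B` for every divisor `e` of `d`. -/
theorem exchange_cycles_poly (A : ℕ → Multiset ℕ) (m g : ℕ) (hA : ∀ i ≤ m, IsPerm (A i))
    (hpi : PseudoInjective A m g) (b : ℕ) (hb : 0 < b) (hgb : g ∣ b)
    (d : ℕ) (hd : d ∣ g) (hcop : Nat.Coprime d (alcm g b)) :
    (∀ X : Multiset ℕ, IsPerm X → ∀ e : ℕ, e ∣ d →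
      peval A m (X + {d * alcm g b}) =
        peval A m (X + Multiset.replicate e (d / e * alcm g b))) ∧
    ∀ (X : Multiset ℕ), IsPerm X → ∀ B : Multiset ℕ,
      (peval A m (X + {d * alcm g b}) = B ↔
        ∀ e : ℕ, e ∣ d →
          peval A m (X + Multiset.replicate e (d / e * alcm g b)) = B) :=
  exchange_cycles_poly_general A m g hpi b d hd hcop
end

section
/- Let A and B be permutations with A pseudo-cancelable, and suppose the equation A·X = B admits at least one solution X among the permutations. Then there exists a solution X* such that every solution Y satisfies card(Y) ≤ card(X*) (where card denotes the number of elements of the multiset counted with multiplicity), and X* is the unique solution of maximal cardinality. -/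
/-!
Write `fixCount X n` for the number of fixed points of the `n`-th power of a permutation with
cycle lengths `X`. It is multiplicative, `fixCount (A·X) = fixCount A · fixCount X`, and by Möbius
inversion it determines `X`. Let `l = ℓ(A)`. As `l` divides every element of `A`, `fixCount A n ≠ 0`
forces `l ∣ n`, and for such `n` a cycle of length `x` can be traded for `x / r` cycles of length
`r`, where `r` keeps only the prime powers of `x` exceeding those of `l`. This reduction preserves
`A·X` and can only increase the number of cycles, strictly unless `X` is already reduced. For
reduced `X` one has `fixCount X n = fixCount X (lcm n l)`, and `fixCount A (lcm n l) ≥ l > 0`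
cancels, so there is only one reduced solution; it has more cycles than every other solution.
-/

open Multiset

def fixCount (X : Multiset ℕ) (n : ℕ) : ℕ := (X.map fun x => if x ∣ n then x else 0).sum

lemma fixCount_bind {α : Type*} (s : Multiset α) (t : α → Multiset ℕ) (n : ℕ) :
    fixCount (s.bind t) n = (s.map fun a => fixCount (t a) n).sum := by
  simp only [fixCount, map_bind, sum_bind]

lemma fixCount_replicate (k y n : ℕ) :
    fixCount (replicate k y) n = k * if y ∣ n then y else 0 := by
  simp only [fixCount, map_replicate, sum_replicate, smul_eq_mul]

lemma le_fixCount {X : Multiset ℕ} {x n : ℕ} (hx : x ∈ X) (hxn : x ∣ n) : x ≤ fixCount X n := by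
  have := le_sum_of_mem (mem_map_of_mem (fun x => if x ∣ n then x else 0) hx)
  rwa [if_pos hxn] at this

lemma exists_dvd_of_fixCount_ne_zero {X : Multiset ℕ} {n : ℕ} (h : fixCount X n ≠ 0) :
    ∃ x ∈ X, x ∣ n := by
  by_contra! hX
  exact h (sum_eq_zero fun y hy => by
    obtain ⟨x, hx, rfl⟩ := mem_map.1 hy
    exact if_neg (hX x hx))

lemma fixCount_pmul (A X : Multiset ℕ) (n : ℕ) :
    fixCount (pmul A X) n = fixCount A n * fixCount X n := by
  have hpair : ∀ a x, fixCount (replicate (a.gcd x) (a.lcm x)) n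
      = (if a ∣ n then a else 0) * if x ∣ n then x else 0 := by
    intro a x
    rw [fixCount_replicate]
    by_cases ha : a ∣ n <;> by_cases hx : x ∣ n <;> simp [ha, hx, Nat.lcm_dvd_iff, Nat.gcd_mul_lcm]
  simp only [pmul, fixCount_bind, hpair, sum_map_mul_left, sum_map_mul_right]
  rfl

lemma fixCount_eq_sum_divisors (X : Multiset ℕ) {n : ℕ} (hn : n ≠ 0) :
    fixCount X n = ∑ d ∈ n.divisors, X.count d * d := by
  induction X using Multiset.induction with
  | empty => simp [fixCount]
  | cons a s ih =>
    have hsplit : ∀ d, (a ::ₘ s).count d * d = s.count d * d + if a = d then d else 0 := by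
      intro d
      rw [count_cons]
      split_ifs <;> simp_all [add_mul, eq_comm]
    simp only [hsplit, Finset.sum_add_distrib, Finset.sum_ite_eq, Nat.mem_divisors, ← ih]
    by_cases ha : a ∣ n <;> simp [fixCount, ha, hn, add_comm]

lemma eq_of_fixCount_eq {X Y : Multiset ℕ} (hX : IsPerm X) (hY : IsPerm Y)
    (h : ∀ n, fixCount X n = fixCount Y n) : X = Y := by
  have hinv : ∀ Z : Multiset ℕ, ∀ n > 0, ∑ x ∈ n.divisorsAntidiagonal,
      ArithmeticFunction.moebius x.1 • (fixCount Z x.2 : ℤ) = (Z.count n * n : ℕ) :=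
    fun Z => (ArithmeticFunction.sum_eq_iff_sum_smul_moebius_eq
      (f := fun d => ((Z.count d * d : ℕ) : ℤ)) (g := fun n => (fixCount Z n : ℤ))).1 fun m hm => by
      rw [fixCount_eq_sum_divisors Z hm.ne', Nat.cast_sum]
  ext n
  rcases n.eq_zero_or_pos with rfl | hn
  · rw [count_eq_zero.2 fun h0 => (hX 0 h0).false, count_eq_zero.2 fun h0 => (hY 0 h0).false]
  · have := (hinv X n hn).symm.trans ((congrArg _ (funext fun x => by rw [h])).trans (hinv Y n hn))
    exact Nat.eq_of_mul_eq_mul_right hn (by exact_mod_cast this)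

lemma isPerm_pmul {A X : Multiset ℕ} (hA : IsPerm A) (hX : IsPerm X) : IsPerm (pmul A X) := by
  intro b hb
  obtain ⟨a, ha, hb⟩ := mem_bind.1 hb
  obtain ⟨x, hx, hb⟩ := mem_bind.1 hb
  rw [eq_of_mem_replicate hb]
  exact Nat.lcm_pos (hA a ha) (hX x hx)

lemma ell_mem {A : Multiset ℕ} (hA : A ≠ 0) : ell A ∈ A :=
  Nat.sInf_mem (exists_mem_of_ne_zero hA)

/-- This is the paper's anti-lcm `alcm l (lcm l x)`, the least `r` with `lcm l r = lcm l x`. -/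
def reducedPart (l x : ℕ) : ℕ :=
  (x.factorization.filter fun p => l.factorization p < x.factorization p).prod (· ^ ·)

def IsReducedFor (l y : ℕ) : Prop :=
  ∀ p, y.factorization p = 0 ∨ l.factorization p < y.factorization p

lemma factorization_reducedPart (l x : ℕ) :
    (reducedPart l x).factorization
      = x.factorization.filter fun p => l.factorization p < x.factorization p :=
  Nat.prod_pow_factorization_eq_self fun p hp =>
    Nat.prime_of_mem_primeFactors (by
      rw [Finsupp.support_filter] at hp
      exact (Finset.mem_filter.1 hp).1)

lemma reducedPart_dvd (l : ℕ) {x : ℕ} (hx : x ≠ 0) : reducedPart l x ∣ x := by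
  have h := Finsupp.prod_filter_mul_prod_filter_not
    (fun p => l.factorization p < x.factorization p) x.factorization (· ^ ·)
  rw [Nat.prod_factorization_pow_eq_self hx] at h
  exact Dvd.intro _ h

lemma reducedPart_pos (l : ℕ) {x : ℕ} (hx : 0 < x) : 0 < reducedPart l x :=
  Nat.pos_of_dvd_of_pos (reducedPart_dvd l hx.ne') hx

lemma isReducedFor_reducedPart (l x : ℕ) : IsReducedFor l (reducedPart l x) := by
  intro p
  rw [factorization_reducedPart, Finsupp.filter_apply]
  split_ifs with h
  · exact Or.inr h
  · exact Or.inl rfl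

lemma reducedPart_dvd_iff {l x n : ℕ} (hl : l ≠ 0) (hx : x ≠ 0) (hn : l ∣ n) :
    reducedPart l x ∣ n ↔ x ∣ n := by
  refine ⟨fun h => ?_, (reducedPart_dvd l hx).trans⟩
  rcases eq_or_ne n 0 with rfl | hn0
  · exact dvd_zero x
  have hr := (Nat.factorization_le_iff_dvd (reducedPart_pos l (Nat.pos_of_ne_zero hx)).ne' hn0).2 h
  have hl := (Nat.factorization_le_iff_dvd hl hn0).2 hn
  refine (Nat.factorization_le_iff_dvd hx hn0).1 (Finsupp.le_def.2 fun p => ?_)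
  have hrp := Finsupp.le_def.1 hr p
  have hlp := Finsupp.le_def.1 hl p
  rw [factorization_reducedPart, Finsupp.filter_apply] at hrp
  split_ifs at hrp <;> omega

lemma IsReducedFor.dvd_of_dvd_lcm {l y n : ℕ} (hred : IsReducedFor l y) (hl : l ≠ 0) (hy : y ≠ 0)
    (h : y ∣ n.lcm l) : y ∣ n := by
  rcases eq_or_ne n 0 with rfl | hn
  · exact dvd_zero y
  have hle := (Nat.factorization_le_iff_dvd hy (Nat.lcm_ne_zero hn hl)).2 h
  rw [Nat.factorization_lcm hn hl] at hle
  refine (Nat.factorization_le_iff_dvd hy hn).1 (Finsupp.le_def.2 fun p => ?_)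
  have hp : y.factorization p ≤ max (n.factorization p) (l.factorization p) :=
    Finsupp.le_def.1 hle p
  rcases hred p with h0 | hlt <;> omega

def reduce (l : ℕ) (X : Multiset ℕ) : Multiset ℕ :=
  X.bind fun x => replicate (x / reducedPart l x) (reducedPart l x)

section Reduce

variable {l : ℕ} {X : Multiset ℕ}

lemma exists_eq_reducedPart_of_mem_reduce {y : ℕ} (hy : y ∈ reduce l X) :
    ∃ x ∈ X, y = reducedPart l x := by
  obtain ⟨x, hx, hy⟩ := mem_bind.1 hy
  exact ⟨x, hx, eq_of_mem_replicate hy⟩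

lemma isPerm_reduce (hX : IsPerm X) : IsPerm (reduce l X) := by
  intro y hy
  obtain ⟨x, hx, rfl⟩ := exists_eq_reducedPart_of_mem_reduce hy
  exact reducedPart_pos l (hX x hx)

lemma isReducedFor_of_mem_reduce {y : ℕ} (hy : y ∈ reduce l X) : IsReducedFor l y := by
  obtain ⟨x, -, rfl⟩ := exists_eq_reducedPart_of_mem_reduce hy
  exact isReducedFor_reducedPart l x

lemma fixCount_reduce (hl : l ≠ 0) (hX : IsPerm X) {n : ℕ} (hn : l ∣ n) :
    fixCount (reduce l X) n = fixCount X n := by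
  rw [reduce, fixCount_bind, fixCount]
  refine congrArg sum (map_congr rfl fun x hx => ?_)
  have hx0 := (hX x hx).ne'
  rw [fixCount_replicate]
  simp only [reducedPart_dvd_iff hl hx0 hn]
  split_ifs
  · exact Nat.div_mul_cancel (reducedPart_dvd l hx0)
  · rfl

lemma div_reducedPart_pos (l : ℕ) {x : ℕ} (hx : 0 < x) : 0 < x / reducedPart l x :=
  Nat.div_pos (Nat.le_of_dvd hx (reducedPart_dvd l hx.ne')) (reducedPart_pos l hx)

lemma card_reduce : card (reduce l X) = (X.map fun x => x / reducedPart l x).sum := by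
  simp only [reduce, card_bind, Function.comp_def, card_replicate]

lemma card_le_card_reduce (hX : IsPerm X) : card X ≤ card (reduce l X) := by
  simpa [card_reduce] using card_nsmul_le_sum (s := X.map fun x => x / reducedPart l x) (a := 1)
    (forall_mem_map_iff.2 fun x hx => div_reducedPart_pos l (hX x hx))

lemma reduce_eq_self_of_card_le (hX : IsPerm X) (h : card (reduce l X) ≤ card X) :
    reduce l X = X := by
  have hone : ∀ x ∈ X, x / reducedPart l x = 1 := by
    by_contra! ⟨x, hx, hne⟩
    have hgt : 1 < x / reducedPart l x := by have := div_reducedPart_pos l (hX x hx); omega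
    have hlt := sum_lt_sum (s := X) (f := fun _ => 1) (g := fun x => x / reducedPart l x)
      (fun y hy => div_reducedPart_pos l (hX y hy)) ⟨x, hx, hgt⟩
    simp only [map_const', sum_replicate, smul_eq_mul, mul_one, ← card_reduce] at hlt
    omega
  calc reduce l X = X.bind fun x => {x} := bind_congr fun x hx => by
        rw [hone x hx, Nat.eq_of_dvd_of_div_eq_one (reducedPart_dvd l (hX x hx).ne') (hone x hx),
          replicate_one]
    _ = X := by rw [bind_singleton, map_id']

end Reduce

section Solutions

variable {A : Multiset ℕ} {l : ℕ}

lemma pmul_reduce (hA : IsPerm A) (hl : l ≠ 0) (hdvd : ∀ a ∈ A, l ∣ a) {X : Multiset ℕ}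
    (hX : IsPerm X) : pmul A (reduce l X) = pmul A X := by
  refine eq_of_fixCount_eq (isPerm_pmul hA (isPerm_reduce hX)) (isPerm_pmul hA hX) fun n => ?_
  rw [fixCount_pmul, fixCount_pmul]
  by_cases hA0 : fixCount A n = 0
  · rw [hA0, zero_mul, zero_mul]
  · obtain ⟨a, ha, han⟩ := exists_dvd_of_fixCount_ne_zero hA0
    rw [fixCount_reduce hl hX ((hdvd a ha).trans han)]

lemma fixCount_lcm_of_isReducedFor {W : Multiset ℕ} (hl : l ≠ 0) (hW : IsPerm W)
    (hWr : ∀ w ∈ W, IsReducedFor l w) (n : ℕ) : fixCount W (n.lcm l) = fixCount W n := by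
  refine congrArg sum (map_congr rfl fun w hw => ?_)
  have hiff : w ∣ n.lcm l ↔ w ∣ n :=
    ⟨(hWr w hw).dvd_of_dvd_lcm hl (hW w hw).ne', fun h => h.trans (Nat.dvd_lcm_left n l)⟩
  simp only [hiff]

lemma eq_of_pmul_eq_of_isReducedFor (hl : 0 < l) (hlA : l ∈ A) {Y Z : Multiset ℕ}
    (hY : IsPerm Y) (hZ : IsPerm Z) (hYr : ∀ y ∈ Y, IsReducedFor l y)
    (hZr : ∀ z ∈ Z, IsReducedFor l z) (h : pmul A Y = pmul A Z) : Y = Z := by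
  refine eq_of_fixCount_eq hY hZ fun n => ?_
  have hA : 0 < fixCount A (n.lcm l) := hl.trans_le (le_fixCount hlA (Nat.dvd_lcm_right n l))
  rw [← fixCount_lcm_of_isReducedFor hl.ne' hY hYr, ← fixCount_lcm_of_isReducedFor hl.ne' hZ hZr]
  exact Nat.eq_of_mul_eq_mul_left hA (by rw [← fixCount_pmul, ← fixCount_pmul, h])

lemma reduce_eq_reduce_of_pmul_eq (hA : IsPerm A) (hlA : l ∈ A) (hdvd : ∀ a ∈ A, l ∣ a)
    {Y Z : Multiset ℕ} (hY : IsPerm Y) (hZ : IsPerm Z) (h : pmul A Y = pmul A Z) :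
    reduce l Y = reduce l Z := by
  have hl := hA l hlA
  refine eq_of_pmul_eq_of_isReducedFor hl hlA (isPerm_reduce hY) (isPerm_reduce hZ)
    (fun _ => isReducedFor_of_mem_reduce) (fun _ => isReducedFor_of_mem_reduce) ?_
  rw [pmul_reduce hA hl.ne' hdvd hY, pmul_reduce hA hl.ne' hdvd hZ, h]

end Solutions

theorem max_components_solution_general (A B : Multiset ℕ) (hA : IsPerm A)
    (hpc : PseudoCancelable A) (hsol : ∃ X : Multiset ℕ, IsPerm X ∧ pmul A X = B) :
    ∃ Xstar : Multiset ℕ, IsPerm Xstar ∧ pmul A Xstar = B ∧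
      (∀ Y : Multiset ℕ, IsPerm Y → pmul A Y = B →
        Multiset.card Y ≤ Multiset.card Xstar) ∧
      (∀ Y : Multiset ℕ, IsPerm Y → pmul A Y = B →
        Multiset.card Y = Multiset.card Xstar → Y = Xstar) := by
  obtain ⟨hA0, hdvd⟩ := hpc
  have hlA : ell A ∈ A := ell_mem hA0
  obtain ⟨X, hX, rfl⟩ := hsol
  have hred : ∀ Y, IsPerm Y → pmul A Y = pmul A X → reduce (ell A) Y = reduce (ell A) X :=
    fun Y hY h => reduce_eq_reduce_of_pmul_eq hA hlA hdvd hY hX h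
  refine ⟨reduce (ell A) X, isPerm_reduce hX, pmul_reduce hA (hA _ hlA).ne' hdvd hX,
    fun Y hY h => ?_, fun Y hY h hcard => ?_⟩
  · rw [← hred Y hY h]
    exact card_le_card_reduce hY
  · rw [← hred Y hY h] at hcard ⊢
    exact (reduce_eq_self_of_card_le hY hcard.ge).symm

/-- if `A` is pseudo-cancelable and `A·X = B` has a solution among the
permutations, then there is a solution `X*` of maximal cardinality, and it is the unique
solution of maximal cardinality. -/
theorem max_components_solution (A B : Multiset ℕ) (hA : IsPerm A) (hB : IsPerm B)
    (hpc : PseudoCancelable A) (hsol : ∃ X : Multiset ℕ, IsPerm X ∧ pmul A X = B) :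
    ∃ Xstar : Multiset ℕ, IsPerm Xstar ∧ pmul A Xstar = B ∧
      (∀ Y : Multiset ℕ, IsPerm Y → pmul A Y = B →
        Multiset.card Y ≤ Multiset.card Xstar) ∧
      (∀ Y : Multiset ℕ, IsPerm Y → pmul A Y = B →
        Multiset.card Y = Multiset.card Xstar → Y = Xstar) :=
  max_components_solution_general A B hA hpc hsol
end
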